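/- arXiv:2406.13485 — 3 statements merged into one kernel-verified Lean document; each statement's English description precedes it below -/
import Mathlib

section
/- Let f : [ℕ]^{<ω} → Q be eventually constant, with Q finite (or more generally arbitrary), and let Z ⊆ ℕ be infinite. Then there exists a finite set s ⊆ Z such that f(s) = f(t) for every finite set t ⊆ Z having s as a proper initial segment (s ⊏ t). -/
/-! If no such `s` existed, starting from `∅` one could extend forever, inside `Z`, to proper
end-extensions `s₀ ⊏ s₁ ⊏ s₂ ⊏ ⋯` with `f (sₙ) ≠ f (sₙ₊₁)`. Each `sₙ` is an initial segment of the
infinite set `X = ⋃ sₙ`, namely `X[#sₙ]`, so `f` fails to stabilise along `X`. -/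

/-- `seg X n` is the set of the `n` smallest elements of `X`. -/
noncomputable def seg (X : Set ℕ) (n : ℕ) : Finset ℕ :=
  (Finset.range n).image (Nat.nth (· ∈ X))

/-- `f` is eventually constant. -/
def EvConst {Q : Type*} (f : Finset ℕ → Q) : Prop :=
  ∀ X : Set ℕ, X.Infinite → ∃ N, ∀ n > N, f (seg X n) = f (seg X N)

/-- `fbar` is the limit function of `f`. -/
def IsLimit {Q : Type*} (f : Finset ℕ → Q) (fbar : Set ℕ → Q) : Prop :=
  ∀ X : Set ℕ, X.Infinite → ∃ N, ∀ n ≥ N, f (seg X n) = fbar X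

/-- `s` is a proper initial segment of `t`. -/
def PInitSeg (s t : Finset ℕ) : Prop :=
  s ⊆ t ∧ s.card < t.card ∧ ∀ x ∈ s, ∀ y ∈ t, y ∉ s → x < y

/-- `X⁻ = X \ {min X}`. -/
def dropMin (X : Set ℕ) : Set ℕ := X \ {sInf X}

/-- `X^{-i}`: `X` without its `i` smallest elements. -/
def dropIter (i : ℕ) (X : Set ℕ) : Set ℕ := dropMin^[i] X

/-- `Z/s`: elements of `Z` above all elements of `s`. -/
def after (Z : Set ℕ) (s : Finset ℕ) : Set ℕ := {n ∈ Z | ∀ m ∈ s, m < n}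

/-- `Y` is a cofinite subset of `X`. -/
def Cofin (Y X : Set ℕ) : Prop := Y ⊆ X ∧ (X \ Y).Finite

open Finset

open Classical in
lemma mem_seg_iff {X : Set ℕ} (hX : X.Infinite) {n x : ℕ} :
    x ∈ seg X n ↔ x ∈ X ∧ #{y ∈ range x | y ∈ X} < n := by
  rw [← Nat.count_eq_card_filter_range]
  constructor
  · simp only [seg, mem_image, mem_range]
    rintro ⟨k, hk, rfl⟩
    refine ⟨Nat.nth_mem_of_infinite hX k, ?_⟩
    rwa [Nat.count_nth_of_infinite (p := (· ∈ X)) hX k]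
  · rintro ⟨hx, hcount⟩
    exact mem_image.2 ⟨_, mem_range.2 hcount, Nat.nth_count hx⟩

open Classical in
lemma seg_card_eq {X : Set ℕ} (hX : X.Infinite) {s : Finset ℕ} (hs : ↑s ⊆ X)
    (hinit : ∀ x ∈ s, ∀ y ∈ X, y ∉ s → x < y) : seg X #s = s := by
  ext x
  rw [mem_seg_iff hX]
  constructor
  · rintro ⟨hxX, hcount⟩
    by_contra hxs
    have hsub : s ⊆ {y ∈ range x | y ∈ X} := fun y hy =>
      mem_filter.2 ⟨mem_range.2 (hinit y hy x hxX hxs), hs hy⟩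
    exact (card_le_card hsub).not_gt hcount
  · intro hx
    refine ⟨hs hx, ?_⟩
    have hsub : {y ∈ range x | y ∈ X} ⊆ s.erase x := by
      intro y hy
      obtain ⟨hyx, hyX⟩ := mem_filter.1 hy
      have hys : y ∈ s := by
        by_contra hys
        exact (mem_range.1 hyx).not_gt (hinit x hx y hyX hys)
      exact mem_erase.2 ⟨(mem_range.1 hyx).ne, hys⟩
    exact (card_le_card hsub).trans_lt (card_erase_lt_of_mem hx)

lemma PInitSeg.trans {s t u : Finset ℕ} (hst : PInitSeg s t) (htu : PInitSeg t u) :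
    PInitSeg s u := by
  obtain ⟨hst, hcard_st, hlt_st⟩ := hst
  obtain ⟨htu, hcard_tu, hlt_tu⟩ := htu
  refine ⟨hst.trans htu, hcard_st.trans hcard_tu, fun x hx y hy hys => ?_⟩
  by_cases hyt : y ∈ t
  · exact hlt_st x hx y hyt hys
  · exact hlt_tu x (hst hx) y hy hyt

instance : IsTrans (Finset ℕ) PInitSeg := ⟨fun _ _ _ => PInitSeg.trans⟩

section Chain

variable {g : ℕ → Finset ℕ} (hg : ∀ n, PInitSeg (g n) (g (n + 1)))
include hg

lemma le_card_of_pInitSeg_chain (n : ℕ) : n ≤ #(g n) :=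
  (strictMono_nat_of_lt_succ fun n => (hg n).2.1).le_apply

lemma infinite_iUnion_of_pInitSeg_chain : (⋃ n, (g n : Set ℕ)).Infinite := by
  intro hfin
  have hle : ∀ n, n ≤ (⋃ n, (g n : Set ℕ)).ncard := fun n =>
    calc n ≤ #(g n) := le_card_of_pInitSeg_chain hg n
      _ = (g n : Set ℕ).ncard := (Set.ncard_coe_finset _).symm
      _ ≤ _ := Set.ncard_le_ncard (Set.subset_iUnion (fun m => (g m : Set ℕ)) n) hfin
  exact (hle _).not_gt (Nat.lt_succ_self _)

lemma seg_iUnion_of_pInitSeg_chain (n : ℕ) : seg (⋃ m, (g m : Set ℕ)) #(g n) = g n := by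
  refine seg_card_eq (infinite_iUnion_of_pInitSeg_chain hg)
    (Set.subset_iUnion (fun m => (g m : Set ℕ)) n) fun x hx y hy hyn => ?_
  obtain ⟨k, hyk⟩ := Set.mem_iUnion.1 hy
  have hnk : n < k := by
    by_contra! hkn
    rcases hkn.eq_or_lt with rfl | hkn
    · exact hyn hyk
    · exact hyn ((Nat.rel_of_forall_rel_succ_of_lt PInitSeg hg hkn).1 hyk)
  exact (Nat.rel_of_forall_rel_succ_of_lt PInitSeg hg hnk).2.2 x hx y hyk hyn

theorem EvConst.eventually_eq_of_pInitSeg_chain {Q : Type*} {f : Finset ℕ → Q} (hf : EvConst f) :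
    ∃ N, ∀ n ≥ N, f (g n) = f (g N) := by
  obtain ⟨M, hM⟩ := hf _ (infinite_iUnion_of_pInitSeg_chain hg)
  have hseg : ∀ n > M, f (g n) = f (seg (⋃ m, (g m : Set ℕ)) M) := fun n hn => by
    rw [← hM _ (hn.trans_le (le_card_of_pInitSeg_chain hg n)), seg_iUnion_of_pInitSeg_chain hg]
  exact ⟨M + 1, fun n hn => (hseg n (by omega)).trans (hseg (M + 1) (by omega)).symm⟩

end Chain

theorem stmt2_general {Q : Type*} (f : Finset ℕ → Q) (hf : EvConst f)
    (Z : Set ℕ) :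
    ∃ s : Finset ℕ, ↑s ⊆ Z ∧
      ∀ t : Finset ℕ, ↑t ⊆ Z → PInitSeg s t → f s = f t := by
  by_contra! hext
  choose next hnext_sub hnext_ext hnext_ne using hext
  let step : {s : Finset ℕ // ↑s ⊆ Z} → {s : Finset ℕ // ↑s ⊆ Z} :=
    fun s => ⟨next s s.2, hnext_sub s s.2⟩
  let s₀ : {s : Finset ℕ // ↑s ⊆ Z} := ⟨∅, by simp⟩
  let g : ℕ → Finset ℕ := fun n => (step^[n] s₀).1
  have hg_succ : ∀ n, g (n + 1) = next (g n) (step^[n] s₀).2 := fun n => by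
    simp only [g]
    rw [Function.iterate_succ_apply']
  have hg : ∀ n, PInitSeg (g n) (g (n + 1)) := fun n => hg_succ n ▸ hnext_ext _ _
  obtain ⟨N, hN⟩ := hf.eventually_eq_of_pInitSeg_chain hg
  exact hnext_ne _ _ (hg_succ N ▸ (hN (N + 1) N.le_succ).symm)

theorem stmt2 {Q : Type*} (f : Finset ℕ → Q) (hf : EvConst f)
    (Z : Set ℕ) (hZ : Z.Infinite) :
    ∃ s : Finset ℕ, ↑s ⊆ Z ∧
      ∀ t : Finset ℕ, ↑t ⊆ Z → PInitSeg s t → f s = f t :=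
  stmt2_general f hf Z
end

section
/- Let f : [ℕ]^{<ω} → {0,1} be eventually constant, with limit function f̄ : [ℕ]^ω → {0,1}. Then there exists an infinite set X ⊆ ℕ such that f̄(X) = f̄(X⁻), where X⁻ = X \ {min X}. (In other words, the two-element antichain is Δ⁰₂-bqo.) -/
lemma fin2aux : ∀ a b c d : Fin 2, a ≠ b → c ≠ d → b ≠ d → a ≠ c := by decide

lemma seg_card (X : Set ℕ) (hX : X.Infinite) (n : ℕ) : (seg X n).card = n := by
  rw [seg, Finset.card_image_of_injOn, Finset.card_range]
  exact fun a _ b _ h => (Nat.nth_injective hX) h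

lemma mem_seg {X : Set ℕ} {n x : ℕ} :
    x ∈ seg X n ↔ ∃ i < n, Nat.nth (· ∈ X) i = x := by
  simp [seg]

lemma seg_mono (X : Set ℕ) {m n : ℕ} (h : m ≤ n) : seg X m ⊆ seg X n :=
  Finset.image_subset_image (by simpa using Finset.range_subset_range.2 h)

lemma seg_subset (X : Set ℕ) (hX : X.Infinite) (n : ℕ) : ↑(seg X n) ⊆ X := by
  intro x hx
  rcases mem_seg.1 (by exact_mod_cast hx) with ⟨i, _, rfl⟩
  exact Nat.nth_mem_of_infinite hX i

/-- If `s ⊆ W` and all other elements of `W` lie above `s`, then `s` is the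
set of the `s.card` smallest elements of `W`. -/
lemma segEq (W : Set ℕ) (hW : W.Infinite) (s : Finset ℕ) (hsub : ↑s ⊆ W)
    (hab : ∀ x ∈ W, x ∉ s → ∀ y ∈ s, y < x) : seg W s.card = s := by
  classical
  refine (Finset.eq_of_subset_of_card_le ?_ ?_).symm
  · intro x hx
    have hxW : x ∈ W := hsub hx
    have hcount : Nat.count (· ∈ W) x < s.card := by
      have h1 : ((Finset.range x).filter (· ∈ W)) ⊆ s.erase x := by
        intro y hy
        simp only [Finset.mem_filter, Finset.mem_range] at hy
        refine Finset.mem_erase.2 ⟨by omega, ?_⟩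
        by_contra hys
        exact absurd (hab y hy.2 hys x hx) (by omega)
      calc Nat.count (· ∈ W) x = ((Finset.range x).filter (· ∈ W)).card :=
            Nat.count_eq_card_filter_range _ _
        _ ≤ (s.erase x).card := Finset.card_le_card h1
        _ < s.card := Finset.card_erase_lt_of_mem hx
    exact mem_seg.2 ⟨Nat.count (· ∈ W) x, hcount, Nat.nth_count hxW⟩
  · rw [seg_card W hW]

lemma sInf_union_min (s : Finset ℕ) (hs : s.Nonempty) (S : Set ℕ)
    (hlt : ∀ y ∈ s, ∀ x ∈ S, y < x) : sInf (↑s ∪ S) = s.min' hs := by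
  apply le_antisymm
  · exact Nat.sInf_le (Set.mem_union_left _ (by exact_mod_cast s.min'_mem hs))
  · apply le_csInf ⟨_, Set.mem_union_left _
      (by exact_mod_cast s.min'_mem hs : (s.min' hs : ℕ) ∈ (↑s : Set ℕ))⟩
    intro b hb
    rcases hb with hb | hb
    · exact s.min'_le _ (by exact_mod_cast hb)
    · exact le_of_lt (hlt _ (s.min'_mem hs) _ hb)

lemma dropMin_union (s : Finset ℕ) (hs : s.Nonempty) (S : Set ℕ)
    (hlt : ∀ y ∈ s, ∀ x ∈ S, y < x) :
    dropMin (↑s ∪ S) = ↑(s.erase (s.min' hs)) ∪ S := by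
  rw [dropMin, sInf_union_min s hs S hlt, Set.union_diff_distrib]
  congr 1
  · simp [Finset.coe_erase]
  · apply Set.diff_singleton_eq_self
    intro hmem
    exact lt_irrefl _ (hlt _ (s.min'_mem hs) _ hmem)

lemma dropMin_insert (m : ℕ) (S : Set ℕ) (hm : m ∉ S) (hlt : ∀ x ∈ S, m < x) :
    dropMin (insert m S) = S := by
  have hinf : sInf (insert m S) = m := by
    apply le_antisymm (Nat.sInf_le (Set.mem_insert _ _))
    apply le_csInf ⟨m, Set.mem_insert _ _⟩
    rintro b (rfl | hb)
    · exact le_refl _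
    · exact le_of_lt (hlt _ hb)
  rw [dropMin, hinf, Set.insert_diff_self_of_notMem hm]

section
variable (fbar : Set ℕ → Fin 2)
  (hno : ∀ X : Set ℕ, X.Infinite → fbar X ≠ fbar (dropMin X))
include hno

/-- Adding one element below an infinite tail (above the finite part) flips `fbar`,
assuming `fbar X ≠ fbar (dropMin X)` always. -/
lemma flip_lemma : ∀ n (s : Finset ℕ), s.card = n → ∀ (S : Set ℕ), S.Infinite →
    (∀ y ∈ s, ∀ x ∈ S, y < x) → ∀ m, m ∉ S → (∀ y ∈ s, y < m) → (∀ x ∈ S, m < x) →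
    fbar (↑s ∪ S) ≠ fbar (↑s ∪ insert m S) := by
  intro n
  induction n with
  | zero =>
    intro s hcard S hS _ m hmS _ hmlt
    rw [Finset.card_eq_zero.1 hcard]
    simp only [Finset.coe_empty, Set.empty_union]
    have h1 := hno (insert m S) ((hS.mono (Set.subset_insert _ _)))
    rw [dropMin_insert m S hmS hmlt] at h1
    exact (Ne.symm h1)
  | succ n ih =>
    intro s hcard S hS hlt m hmS hmlt hmlt'
    have hs : s.Nonempty := Finset.card_pos.1 (by omega)
    set a := s.min' hs with ha
    have hX1 : (↑s ∪ S : Set ℕ).Infinite := hS.mono Set.subset_union_right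
    have hSm : (insert m S).Infinite := hS.mono (Set.subset_insert _ _)
    have hX2 : (↑s ∪ insert m S : Set ℕ).Infinite := hSm.mono Set.subset_union_right
    have hlt2 : ∀ y ∈ s, ∀ x ∈ insert m S, y < x := by
      rintro y hy x (rfl | hx)
      · exact hmlt y hy
      · exact hlt y hy x hx
    have d1 := dropMin_union s hs S hlt
    have d2 := dropMin_union s hs (insert m S) hlt2
    have hes : (s.erase a).card = n := by
      rw [Finset.card_erase_of_mem (s.min'_mem hs)]; omega
    have ihh := ih (s.erase a) hes S hS
      (fun y hy x hx => hlt y (Finset.mem_of_mem_erase hy) x hx) m hmS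
      (fun y hy => hmlt y (Finset.mem_of_mem_erase hy)) hmlt'
    have h1 := hno _ hX1
    have h2 := hno _ hX2
    rw [d1] at h1
    rw [d2] at h2
    exact fin2aux _ _ _ _ h1 h2 ihh

/-- Step lemma: extend any finite set, flipping the value of `f`. -/
lemma step_lemma (f : Finset ℕ → Fin 2) (hlim : IsLimit f fbar) (s : Finset ℕ) :
    ∃ t : Finset ℕ, s ⊆ t ∧ s.card < t.card ∧
      (∀ x ∈ t, x ∉ s → ∀ y ∈ s, y < x) ∧ f t ≠ f s := by
  classical
  set M := s.sup id with hM
  have hsM : ∀ y ∈ s, y ≤ M := fun y hy => Finset.le_sup (f := id) hy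
  set T : Set ℕ := Set.Ioi (M + 1) with hT
  have hTinf : T.Infinite := Set.Ioi_infinite _
  have hltT : ∀ y ∈ s, ∀ x ∈ T, y < x := fun y hy x hx => by
    have := hsM y hy; simp only [hT, Set.mem_Ioi] at hx; omega
  have hmT : (M + 1) ∉ T := by simp [hT]
  have hym : ∀ y ∈ s, y < M + 1 := fun y hy => by have := hsM y hy; omega
  have hmx : ∀ x ∈ T, M + 1 < x := fun x hx => by simpa [hT] using hx
  have hflip := flip_lemma fbar hno s.card s rfl T hTinf hltT (M + 1) hmT hym hmx
  have key : ∃ W : Set ℕ, W.Infinite ∧ (↑s ⊆ W) ∧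
      (∀ x ∈ W, x ∉ s → ∀ y ∈ s, y < x) ∧ fbar W ≠ f s := by
    by_cases hc : fbar (↑s ∪ T) = f s
    · refine ⟨↑s ∪ insert (M+1) T,
        ((hTinf.mono (Set.subset_insert _ _)).mono Set.subset_union_right),
        Set.subset_union_left, ?_, ?_⟩
      · rintro x (hx | hx) hxs y hy
        · exact absurd (by exact_mod_cast hx) hxs
        · rcases hx with rfl | hx
          · exact hym y hy
          · exact hltT y hy x hx
      · rw [← hc]; exact (Ne.symm hflip)
    · refine ⟨↑s ∪ T, hTinf.mono Set.subset_union_right, Set.subset_union_left, ?_, hc⟩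
      rintro x (hx | hx) hxs y hy
      · exact absurd (by exact_mod_cast hx) hxs
      · exact hltT y hy x hx
  obtain ⟨W, hWinf, hWsub, hWab, hWne⟩ := key
  obtain ⟨N, hN⟩ := hlim W hWinf
  set n := max N (s.card + 1) with hn
  refine ⟨seg W n, ?_, ?_, ?_, ?_⟩
  · have := segEq W hWinf s hWsub hWab
    rw [← this]; exact seg_mono W (le_trans (Nat.le_succ _) (le_max_right _ _))
  · rw [seg_card W hWinf]; omega
  · intro x hx hxs y hy
    exact hWab x (seg_subset W hWinf n hx) hxs y hy
  · rw [hN n (le_max_left _ _)]; exact hWne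

end

theorem stmt5 (f : Finset ℕ → Fin 2) (fbar : Set ℕ → Fin 2)
    (hf : EvConst f) (hlim : IsLimit f fbar) :
    ∃ X : Set ℕ, X.Infinite ∧ fbar X = fbar (dropMin X) := by
  by_contra hcon
  push_neg at hcon
  have hno : ∀ X : Set ℕ, X.Infinite → fbar X ≠ fbar (dropMin X) :=
    fun X hX => hcon X hX
  choose g hg using step_lemma fbar hno f hlim
  set S : ℕ → Finset ℕ := fun k => g^[k] ∅ with hS
  have hSsucc : ∀ k, S (k + 1) = g (S k) := fun k => Function.iterate_succ_apply' g k ∅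
  have hsub : ∀ k, S k ⊆ S (k + 1) := fun k => by rw [hSsucc]; exact (hg (S k)).1
  have hcard : ∀ k, (S k).card < (S (k + 1)).card := fun k => by
    rw [hSsucc]; exact (hg (S k)).2.1
  have hab : ∀ k, ∀ x ∈ S (k+1), x ∉ S k → ∀ y ∈ S k, y < x := fun k => by
    rw [hSsucc]; exact (hg (S k)).2.2.1
  have hne : ∀ k, f (S (k+1)) ≠ f (S k) := fun k => by
    rw [hSsucc]; exact (hg (S k)).2.2.2
  have hmono : ∀ k j, k ≤ j → S k ⊆ S j := by
    intro k j hkj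
    induction j, hkj using Nat.le_induction with
    | base => exact subset_rfl
    | succ j hkj ih => exact ih.trans (hsub j)
  have hcard' : ∀ k, k ≤ (S k).card := by
    intro k
    induction k with
    | zero => exact Nat.zero_le _
    | succ k ih => have := hcard k; omega
  have habove : ∀ k j, k ≤ j → ∀ x ∈ S j, x ∉ S k → ∀ y ∈ S k, y < x := by
    intro k j hkj
    induction j, hkj using Nat.le_induction with
    | base => intro x hx hx'; exact absurd hx hx'
    | succ j hkj ih =>
      intro x hx hx' y hy
      by_cases hxj : x ∈ S j
      · exact ih x hxj hx' y hy
      · exact hab j x hx hxj y (hmono k j hkj hy)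
  set Z : Set ℕ := ⋃ k, (↑(S k) : Set ℕ) with hZdef
  have hmemZ : ∀ x, x ∈ Z ↔ ∃ k, x ∈ S k := by
    intro x; simp [hZdef]
  have hZinf : Z.Infinite := by
    by_contra hfin
    rw [Set.not_infinite] at hfin
    set k := hfin.toFinset.card + 1 with hk
    have hsubF : S k ⊆ hfin.toFinset := by
      intro x hx
      exact hfin.mem_toFinset.2 ((hmemZ x).2 ⟨k, hx⟩)
    have := Finset.card_le_card hsubF
    have := hcard' k
    omega
  have hseg : ∀ k, seg Z (S k).card = S k := by
    intro k
    apply segEq Z hZinf (S k)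
    · intro x hx
      exact (hmemZ x).2 ⟨k, by exact_mod_cast hx⟩
    · intro x hxZ hxk y hy
      obtain ⟨j, hj⟩ := (hmemZ x).1 hxZ
      rcases le_total j k with h | h
      · exact absurd (hmono j k h hj) hxk
      · exact habove k j h x hj hxk y hy
  obtain ⟨N, hN⟩ := hf Z hZinf
  have h1 : f (S (N + 1)) = f (seg Z N) := by
    rw [← hseg (N + 1)]
    exact hN _ (by have := hcard' (N + 1); omega)
  have h2 : f (S (N + 1 + 1)) = f (seg Z N) := by
    rw [← hseg (N + 1 + 1)]
    refine hN _ ?_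
    have := hcard' (N + 1)
    have := hcard (N + 1)
    omega
  exact hne (N + 1) (h2.trans h1.symm)
end

section
/- Let f : [ℕ]^{<ω} → {0,1} be eventually constant with limit function f̄, and suppose f̄ is continuous in the sense that every infinite X ⊆ ℕ admits N ∈ ℕ such that f̄(X) = f̄(Y) whenever Y is infinite and X[N] = Y[N]. If there is an infinite X ⊆ ℕ and i ∈ {0,1} such that f̄(Y) = i for every cofinite subset Y of X, then f̄(Z) = i for every infinite subset Z of X. -/
theorem stmt7 (f : Finset ℕ → Fin 2) (fbar : Set ℕ → Fin 2)
    (hf : EvConst f) (hlim : IsLimit f fbar)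
    (hcont : ∀ X : Set ℕ, X.Infinite →
      ∃ N, ∀ Y : Set ℕ, Y.Infinite → seg X N = seg Y N → fbar Y = fbar X)
    (X : Set ℕ) (hX : X.Infinite) (i : Fin 2)
    (hcof : ∀ Y : Set ℕ, Cofin Y X → fbar Y = i) :
    ∀ Z : Set ℕ, Z ⊆ X → Z.Infinite → fbar Z = i := by
  intro Z hZX hZ
  classical
  obtain ⟨N, hN⟩ := hcont Z hZ
  set s : Finset ℕ := seg Z N with hs
  set Y : Set ℕ := ↑s ∪ after X s with hYdef
  have hsZ : ∀ x ∈ s, x ∈ Z := by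
    intro x hx
    simp only [hs, seg, Finset.mem_image, Finset.mem_range] at hx
    obtain ⟨k, _, rfl⟩ := hx
    exact Nat.nth_mem_of_infinite hZ k
  have hYX : Y ⊆ X := by
    rintro y (hy | hy)
    · exact hZX (hsZ y hy)
    · exact hy.1
  have hXYfin : (X \ Y).Finite := by
    apply Set.Finite.subset (Set.finite_Iic (s.sup id))
    rintro n ⟨hnX, hnY⟩
    simp only [hYdef, Set.mem_union, not_or, after, Set.mem_setOf_eq, not_and, not_forall] at hnY
    obtain ⟨k, hk, hkn⟩ := hnY.2 hnX
    exact le_trans (Nat.le_of_not_lt hkn) (Finset.le_sup (f := id) hk)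
  have hYinf : Y.Infinite := by
    refine (hX.diff hXYfin).mono ?_
    intro x hx
    by_contra h
    exact hx.2 ⟨hx.1, h⟩
  have hcofY : fbar Y = i := hcof Y ⟨hYX, hXYfin⟩
  -- key : the n-th elements agree for k < N
  have key : ∀ k < N, Nat.nth (· ∈ Y) k = Nat.nth (· ∈ Z) k := by
    intro k hk
    set a := Nat.nth (· ∈ Z) k with ha
    have haS : a ∈ s := by
      simp only [hs, seg, Finset.mem_image, Finset.mem_range]
      exact ⟨k, hk, rfl⟩
    have haY : a ∈ Y := Or.inl haS
    have hbelow : ∀ y < a, (y ∈ Y ↔ y ∈ Z) := by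
      intro y hy
      constructor
      · rintro (h | h)
        · exact hsZ y h
        · exact absurd (h.2 a haS) (by omega)
      · intro hyZ
        left
        have hcZ : Nat.count (· ∈ Z) a = k := by
          rw [ha]; exact Nat.count_nth_of_infinite (p := (· ∈ Z)) hZ k
        have hcnt : Nat.count (· ∈ Z) y ≤ k := by
          have := Nat.count_monotone (· ∈ Z) (le_of_lt hy)
          exact le_trans this (le_of_eq hcZ)
        have hnth : Nat.nth (· ∈ Z) (Nat.count (· ∈ Z) y) = y := Nat.nth_count hyZ
        have : y ∈ s := by
          simp only [hs, seg, Finset.mem_image, Finset.mem_range]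
          exact ⟨Nat.count (· ∈ Z) y, lt_of_le_of_lt hcnt hk, hnth⟩
        exact Finset.mem_coe.mpr this
    have hcount : Nat.count (· ∈ Y) a = Nat.count (· ∈ Z) a := by
      simp only [Nat.count_eq_card_filter_range]
      congr 1
      apply Finset.filter_congr
      intro y hy
      simp only [Finset.mem_range] at hy
      simpa using hbelow y hy
    have h1 : Nat.nth (· ∈ Y) (Nat.count (· ∈ Y) a) = a := Nat.nth_count haY
    have hcZ : Nat.count (· ∈ Z) a = k := by
      rw [ha]; exact Nat.count_nth_of_infinite (p := (· ∈ Z)) hZ k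
    rw [hcount, hcZ] at h1
    exact h1
  have hseg : seg Z N = seg Y N := by
    simp only [seg]
    apply Finset.image_congr
    intro x hx
    simp only [Finset.coe_range, Set.mem_Iio] at hx
    exact (key x hx).symm
  rw [← hcofY]
  exact (hN Y hYinf hseg).symm
end
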